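/- arXiv:1502.01150 — 2 statements merged into one kernel-verified Lean document; each statement's English description precedes it below -/
import Mathlib

section
/- Let q be a prime power, let n and m be positive integers with m > n, and let 𝓔 be a weak egg in a (2n+m)-dimensional vector space V over the finite field F with exactly q elements that is good at an element E ∈ 𝓔. Let π : V → V/E be the canonical projection, let 𝓢 = {π(E') : E' ∈ 𝓔 \ {E}} be the induced partial spread in V/E (of size q^m), and let 𝓓 be any Desarguesian spread of V/E containing every element of 𝓢. Then 𝓓 \ 𝓢 has exactly (q^m − 1)/(q^n − 1) elements and the span of the elements of 𝓓 \ 𝓢 is an m-dimensional subspace of V/E. -/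
open Submodule Module


section helpers
lemma aux_ncard_biUnion {α β : Type*} [Finite β] (s : Set α) (f : α → Set β)
    (hs : s.Finite)
    (hdisj : ∀ a ∈ s, ∀ b ∈ s, a ≠ b → Disjoint (f a) (f b)) :
    (⋃ a ∈ s, f a).ncard = ∑ a ∈ hs.toFinset, (f a).ncard := by
  classical
  cases nonempty_fintype β
  have h1 : (⋃ a ∈ s, f a).toFinset = hs.toFinset.biUnion (fun a => (f a).toFinset) := by
    ext x; simp
  rw [Set.ncard_eq_toFinset_card', h1, Finset.card_biUnion]
  · exact Finset.sum_congr rfl fun a _ => (Set.ncard_eq_toFinset_card' _).symm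
  · intro a ha b hb hab
    simpa [Finset.disjoint_left, Set.disjoint_left] using
      hdisj a (hs.mem_toFinset.mp ha) b (hs.mem_toFinset.mp hb) hab
end helpers

-- core lemma over K
set_option linter.unusedSectionVars false
section core

variable {K : Type*} [Field K] [Fintype K] {W : Type*} [AddCommGroup W] [Module K W]
  [Finite W]

-- card of a line
lemma aux_line_card (w : W) (hw : w ≠ 0) : Nat.card (K ∙ w) = Fintype.card K := by
  have e := LinearEquiv.toSpanNonzeroSingleton K W w hw
  simpa using (Nat.card_congr e.toEquiv).symm

-- set-ncard of a line
lemma aux_line_ncard (w : W) (hw : w ≠ 0) :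
    ((K ∙ w : Submodule K W) : Set W).ncard = Fintype.card K := by
  rw [← Nat.card_coe_set_eq]
  exact aux_line_card w hw

-- two spans equal
lemma aux_span_eq {w v : W} (hv : v ≠ 0) (h : v ∈ K ∙ w) : (K ∙ v : Submodule K W) = K ∙ w := by
  obtain ⟨c, rfl⟩ := Submodule.mem_span_singleton.mp h
  have hc : c ≠ 0 := by rintro rfl; simp at hv
  exact Submodule.span_singleton_smul_eq (IsUnit.mk0 c hc) w

lemma aux_plane_finrank {s z : W} (hs : s ≠ 0) (hz : z ∉ (K ∙ s : Submodule K W)) :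
    finrank K ((K ∙ s) ⊔ (K ∙ z) : Submodule K W) = 2 := by
  have hzne : z ≠ 0 := fun h => hz (h ▸ Submodule.zero_mem _)
  have hinf : (K ∙ s) ⊓ (K ∙ z) = ⊥ := by
    rw [Submodule.eq_bot_iff]
    intro v hv
    by_contra hvne
    have h1 : (K ∙ z : Submodule K W) = K ∙ s := by
      rw [← aux_span_eq hvne hv.2, aux_span_eq hvne hv.1]
    exact hz (h1 ▸ Submodule.mem_span_singleton_self z)
  have h2 := Submodule.finrank_sup_add_finrank_inf_eq (K ∙ s) (K ∙ z)
  rw [hinf, finrank_bot, finrank_span_singleton hs, finrank_span_singleton hzne] at h2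
  omega


lemma aux_plane_eq {s z : W} (hs : s ≠ 0) (hz : z ∉ (K ∙ s : Submodule K W))
    (P : Submodule K W) (hP : (K ∙ s) ≤ P) (h2 : finrank K P = 2) (hzP : z ∈ P) :
    P = (K ∙ s) ⊔ (K ∙ z) := by
  have hle : (K ∙ s) ⊔ (K ∙ z) ≤ P := sup_le hP ((Submodule.span_singleton_le_iff_mem _ _).mpr hzP)
  exact (Submodule.eq_of_le_of_finrank_eq hle (by rw [aux_plane_finrank hs hz, h2])).symm

lemma aux_sub_ncard (P : Submodule K W) :
    ((P : Set W)).ncard = Fintype.card K ^ finrank K P := by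
  haveI : Fintype P := Fintype.ofFinite _
  rw [← Nat.card_coe_set_eq, Nat.card_eq_fintype_card]
  exact card_eq_pow_finrank

end core

section part
lemma aux_partition_count {α β : Type*} [Finite β] (s : Set α) (f : α → Set β) (T : Set β) (c : ℕ)
    (hdisj : ∀ a ∈ s, ∀ b ∈ s, a ≠ b → Disjoint (f a) (f b))
    (hunion : ⋃ a ∈ s, f a = T) (hc : ∀ a ∈ s, (f a).ncard = c)
    (hs : s.Finite) : T.ncard = s.ncard * c := by
  rw [← hunion, aux_ncard_biUnion s f hs hdisj]
  rw [Finset.sum_congr rfl (fun a ha => hc a (hs.mem_toFinset.mp ha)), Finset.sum_const,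
    smul_eq_mul, Set.ncard_eq_toFinset_card _ hs]

lemma aux_partition_ones {α β : Type*} [Finite β] (s : Set α) (f : α → Set β)
    (hdisj : ∀ a ∈ s, ∀ b ∈ s, a ≠ b → Disjoint (f a) (f b))
    (hne : ∀ a ∈ s, (f a).Nonempty) (hs : s.Finite) (hfin : ∀ a ∈ s, (f a).Finite)
    (hcard : (⋃ a ∈ s, f a).ncard = s.ncard) :
    ∀ a ∈ s, (f a).ncard = 1 := by
  rw [aux_ncard_biUnion s f hs hdisj] at hcard
  by_contra hcon
  push_neg at hcon
  obtain ⟨a0, ha0, hne1⟩ := hcon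
  have h1 : ∀ a ∈ hs.toFinset, 1 ≤ (f a).ncard := fun a ha =>
    (Set.ncard_pos (hfin a (hs.mem_toFinset.mp ha))).mpr (hne a (hs.mem_toFinset.mp ha))
  have h2 : 1 < (f a0).ncard := lt_of_le_of_ne (h1 a0 (hs.mem_toFinset.mpr ha0)) (Ne.symm hne1)
  have h3 : ∑ a ∈ hs.toFinset, (1 : ℕ) < ∑ a ∈ hs.toFinset, (f a).ncard :=
    Finset.sum_lt_sum h1 ⟨a0, hs.mem_toFinset.mpr ha0, h2⟩
  rw [Finset.sum_const, smul_eq_mul, mul_one, hcard] at h3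
  rw [Set.ncard_eq_toFinset_card _ hs] at h3
  exact lt_irrefl _ h3

lemma aux_sq_sub_one (a : ℕ) (ha : 1 ≤ a) : (a + 1) * (a - 1) = a * a - 1 := by
  obtain ⟨k, rfl⟩ := Nat.exists_eq_add_of_le ha
  rw [Nat.add_sub_cancel_left]
  apply Nat.eq_sub_of_add_eq
  ring
end part




structure FieldStructureOn (q n : ℕ) (F : Type*) [Field F]
    (W : Type*) [AddCommGroup W] [Module F W] where
  K : Type
  [fieldK : Field K]
  [fintypeK : Fintype K]
  [algFK : Algebra F K]
  [modKW : Module K W]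
  card_K : Fintype.card K = q ^ n
  compat : ∀ (a : F) (w : W), (algebraMap F K a) • w = a • w

namespace FieldStructureOn

variable {q n : ℕ} {F : Type*} [Field F] {W : Type*} [AddCommGroup W] [Module F W]

def line (fs : FieldStructureOn q n F W) (w : W) : Set W :=
  letI := fs.fieldK
  letI := fs.modKW
  Set.range fun c : fs.K => c • w

/-- `O` is the set of `K`-lines of zeros of a nondegenerate quadratic form over `K`. -/
def ConicWitness (fs : FieldStructureOn q n F W) (O : Set (Submodule F W)) : Prop :=
  letI := fs.fieldK
  letI := fs.modKW
  ∃ Q : QuadraticForm fs.K W,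
    (∀ x : W, (∀ y : W, Q (x + y) - Q x - Q y = 0) → x = 0) ∧
    O = {X : Submodule F W | ∃ w : W, w ≠ 0 ∧ Q w = 0 ∧ (X : Set W) = fs.line w}

/-- `𝓔` is the set of `K`-lines of zeros of a nondegenerate quadratic form over `K`
admitting no totally singular `2`-dimensional `K`-subspace (an elliptic quadric). -/
def EllipticWitness (fs : FieldStructureOn q n F W) (𝓔 : Set (Submodule F W)) : Prop :=
  letI := fs.fieldK
  letI := fs.modKW
  ∃ Q : QuadraticForm fs.K W,
    (∀ x : W, (∀ y : W, Q (x + y) - Q x - Q y = 0) → x = 0) ∧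
    (∀ U : Submodule fs.K W, Module.finrank fs.K U = 2 → ¬ ∀ w ∈ U, Q w = 0) ∧
    𝓔 = {X : Submodule F W | ∃ w : W, w ≠ 0 ∧ Q w = 0 ∧ (X : Set W) = fs.line w}

end FieldStructureOn

def IsDesarguesianSpread (q n : ℕ) {F : Type*} [Field F]
    {W : Type*} [AddCommGroup W] [Module F W] (S : Set (Submodule F W)) : Prop :=
  ∃ fs : FieldStructureOn q n F W,
    S = {X : Submodule F W | ∃ w : W, w ≠ 0 ∧ (X : Set W) = fs.line w}

/-- `S`, a set of subspaces of `V` contained in `P`, is a Desarguesian spread of `P`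
regarded as an `F`-vector space in its own right. -/
def IsDesarguesianSpreadIn (q n : ℕ) {F : Type*} [Field F]
    {V : Type*} [AddCommGroup V] [Module F V]
    (P : Submodule F V) (S : Set (Submodule F V)) : Prop :=
  (∀ X ∈ S, X ≤ P) ∧
  IsDesarguesianSpread q n ((fun Y : Submodule F V => Y.comap P.subtype) '' S)

/-- A pseudo-cap: a set of `n`-dimensional subspaces, any three distinct members of
which span a subspace of dimension `3n`. -/
def IsPseudoCap (n : ℕ) {F : Type*} [Field F]
    {V : Type*} [AddCommGroup V] [Module F V] (C : Set (Submodule F V)) : Prop :=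
  (∀ E ∈ C, finrank F E = n) ∧
  ∀ E₁ ∈ C, ∀ E₂ ∈ C, ∀ E₃ ∈ C,
    E₁ ≠ E₂ → E₁ ≠ E₃ → E₂ ≠ E₃ → finrank F ↥(E₁ ⊔ E₂ ⊔ E₃) = 3 * n

/-- A weak egg: a pseudo-cap of size `q ^ m + 1`. -/
def IsWeakEgg (q n m : ℕ) {F : Type*} [Field F]
    {V : Type*} [AddCommGroup V] [Module F V] (𝓔 : Set (Submodule F V)) : Prop :=
  IsPseudoCap n 𝓔 ∧ 𝓔.ncard = q ^ m + 1

/-- An egg: a weak egg each of whose elements has a tangent space. -/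
def IsEgg (q n m : ℕ) {F : Type*} [Field F]
    {V : Type*} [AddCommGroup V] [Module F V] (𝓔 : Set (Submodule F V)) : Prop :=
  IsWeakEgg q n m 𝓔 ∧
  ∀ E ∈ 𝓔, ∃ T : Submodule F V, finrank F T = n + m ∧ E ≤ T ∧
    ∀ E' ∈ 𝓔, E' ≠ E → T ⊓ E' = ⊥

/-- A weak egg `𝓔` is good at `E` if every `3n`-dimensional subspace containing `E`
and at least two other elements of `𝓔` contains exactly `q ^ n + 1` elements of `𝓔`. -/
def IsGoodAt (q n : ℕ) {F : Type*} [Field F]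
    {V : Type*} [AddCommGroup V] [Module F V]
    (𝓔 : Set (Submodule F V)) (E : Submodule F V) : Prop :=
  ∀ W : Submodule F V, finrank F W = 3 * n → E ≤ W →
    (∃ E₁ ∈ 𝓔, ∃ E₂ ∈ 𝓔, E₁ ≠ E ∧ E₂ ≠ E ∧ E₁ ≠ E₂ ∧ E₁ ≤ W ∧ E₂ ≤ W) →
    {E' ∈ 𝓔 | E' ≤ W}.ncard = q ^ n + 1

/-- `E` induces (in `V ⧸ E`) a partial spread which extends to a Desarguesian spread. -/
def InducesDesarguesian (q n : ℕ) {F : Type*} [Field F]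
    {V : Type*} [AddCommGroup V] [Module F V]
    (𝓒 : Set (Submodule F V)) (E : Submodule F V) : Prop :=
  ∃ D : Set (Submodule F (V ⧸ E)), IsDesarguesianSpread q n D ∧
    ∀ E' ∈ 𝓒, E' ≠ E → E'.map E.mkQ ∈ D

/-- A pseudo-cap is elementary if it is contained in a Desarguesian spread,
i.e. every element is a `K`-line for a compatible `K`-structure on `V`. -/
def IsElementary (q n : ℕ) {F : Type*} [Field F]
    {V : Type*} [AddCommGroup V] [Module F V] (𝓒 : Set (Submodule F V)) : Prop :=
  ∃ fs : FieldStructureOn q n F V, ∀ X ∈ 𝓒, ∃ w : V, w ≠ 0 ∧ (X : Set V) = fs.line w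

/-- `O` is a pseudo-conic in the `3n`-dimensional space `W`. -/
def IsPseudoConic (q n : ℕ) {F : Type*} [Field F]
    {W : Type*} [AddCommGroup W] [Module F W] (O : Set (Submodule F W)) : Prop :=
  ∃ fs : FieldStructureOn q n F W, fs.ConicWitness O

/-- `O`, a set of subspaces of `V` contained in `W`, is a pseudo-conic in `W`. -/
def IsPseudoConicIn (q n : ℕ) {F : Type*} [Field F]
    {V : Type*} [AddCommGroup V] [Module F V]
    (W : Submodule F V) (O : Set (Submodule F V)) : Prop :=
  (∀ X ∈ O, X ≤ W) ∧
  IsPseudoConic q n ((fun Y : Submodule F V => Y.comap W.subtype) '' O)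

/-- A weak egg in a `4n`-dimensional space is classical if it is the field reduction
of an elliptic quadric of `PG(3, q^n)`. -/
def IsClassical (q n : ℕ) {F : Type*} [Field F]
    {V : Type*} [AddCommGroup V] [Module F V] (𝓔 : Set (Submodule F V)) : Prop :=
  ∃ fs : FieldStructureOn q n F V, fs.EllipticWitness 𝓔

/-- `C`, a set of subspaces of `V` contained in `W`, is elementary inside `W`. -/
def IsElementaryIn (q n : ℕ) {F : Type*} [Field F]
    {V : Type*} [AddCommGroup V] [Module F V]
    (W : Submodule F V) (C : Set (Submodule F V)) : Prop :=
  (∀ X ∈ C, X ≤ W) ∧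
  ∃ fs : FieldStructureOn q n F ↥W,
    ∀ X ∈ C, ∃ w : ↥W, w ≠ 0 ∧ ((X.comap W.subtype : Submodule F ↥W) : Set ↥W) = fs.line w

/-- If a weak egg `𝓔` is good at `E`, `𝓢` is the partial spread induced by `E` in
`V ⧸ E` and `𝓓` is a Desarguesian spread of `V ⧸ E` containing `𝓢`, then `𝓓 \ 𝓢`
has exactly `(q^m - 1)/(q^n - 1)` elements and spans an `m`-dimensional subspace. -/

theorem stmt_15 (q n m : ℕ) (hq : IsPrimePow q) (hn : 0 < n) (hm : n < m)
    (F : Type*) [Field F] [Fintype F] (hF : Fintype.card F = q)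
    (V : Type*) [AddCommGroup V] [Module F V] (hV : finrank F V = 2 * n + m)
    (𝓔 : Set (Submodule F V)) (h𝓔 : IsWeakEgg q n m 𝓔)
    (E : Submodule F V) (hE : E ∈ 𝓔) (hgood : IsGoodAt q n 𝓔 E)
    (𝓢 : Set (Submodule F (V ⧸ E)))
    (h𝓢 : 𝓢 = (fun E' : Submodule F V => E'.map E.mkQ) '' (𝓔 \ {E}))
    (𝓓 : Set (Submodule F (V ⧸ E))) (h𝓓 : IsDesarguesianSpread q n 𝓓)
    (hsub : 𝓢 ⊆ 𝓓) :
    (𝓓 \ 𝓢).ncard = (q ^ m - 1) / (q ^ n - 1) ∧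
      finrank F ↥(sSup (𝓓 \ 𝓢)) = m := by

  classical
  obtain ⟨⟨hdimE, hspan3⟩, hcardE⟩ := h𝓔
  have hq2 : 2 ≤ q := hq.two_le
  haveI : FiniteDimensional F V := FiniteDimensional.of_finrank_pos (by rw [hV]; omega)
  haveI : Finite V := Module.finite_of_finite F
  haveI : Finite (V ⧸ E) := Quotient.finite _
  haveI : Finite (Submodule F (V ⧸ E)) :=
    Finite.of_injective _ (SetLike.coe_injective (A := Submodule F (V ⧸ E)))
  haveI : Finite (Submodule F V) :=
    Finite.of_injective _ (SetLike.coe_injective (A := Submodule F V))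
  have hEfr : finrank F E = n := hdimE E hE
  have hfrQ : finrank F (V ⧸ E) = n + m := by
    have h := Submodule.finrank_quotient_add_finrank E
    rw [hEfr, hV] at h; omega
  obtain ⟨fs, hfs⟩ := h𝓓
  letI : Field fs.K := fs.fieldK
  letI : Fintype fs.K := fs.fintypeK
  letI : Algebra F fs.K := fs.algFK
  letI : Module fs.K (V ⧸ E) := fs.modKW
  haveI : IsScalarTower F fs.K (V ⧸ E) := IsScalarTower.of_algebraMap_smul fs.compat
  haveI : Finite (Submodule fs.K (V ⧸ E)) :=
    Finite.of_injective _ (SetLike.coe_injective (A := Submodule fs.K (V ⧸ E)))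
  have hcardK : Fintype.card fs.K = q ^ n := fs.card_K
  have hline : ∀ w : V ⧸ E,
      fs.line w = ((fs.K ∙ w : Submodule fs.K (V ⧸ E)) : Set (V ⧸ E)) := by
    intro w
    ext x
    simp only [FieldStructureOn.line, Set.mem_range, SetLike.mem_coe,
      Submodule.mem_span_singleton]
  set Dof : (V ⧸ E) → Submodule F (V ⧸ E) :=
    fun w => (fs.K ∙ w).restrictScalars F with hDofdef
  have hDof_coe : ∀ w : V ⧸ E,
      ((Dof w : Submodule F (V ⧸ E)) : Set (V ⧸ E)) =
        ((fs.K ∙ w : Submodule fs.K (V ⧸ E)) : Set (V ⧸ E)) := fun w => rfl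
  have hmemD_iff : ∀ X : Submodule F (V ⧸ E), X ∈ 𝓓 ↔ ∃ w : V ⧸ E, w ≠ 0 ∧
      (X : Set (V ⧸ E)) = ((fs.K ∙ w : Submodule fs.K (V ⧸ E)) : Set (V ⧸ E)) := by
    intro X
    rw [hfs]
    simp only [Set.mem_setOf_eq]
    constructor
    · rintro ⟨w, hw, h⟩; exact ⟨w, hw, by rw [h, hline w]⟩
    · rintro ⟨w, hw, h⟩; exact ⟨w, hw, by rw [h, hline w]⟩
  have hDof_mem : ∀ w : V ⧸ E, w ≠ 0 → Dof w ∈ 𝓓 :=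
    fun w hw => (hmemD_iff _).mpr ⟨w, hw, rfl⟩
  have hD_eq : ∀ X ∈ 𝓓, ∀ v ∈ X, v ≠ 0 → X = Dof v := by
    intro X hX v hv hvne
    obtain ⟨w, hw, hXw⟩ := (hmemD_iff X).mp hX
    apply SetLike.coe_injective
    have hv' : v ∈ (fs.K ∙ w : Submodule fs.K (V ⧸ E)) := by
      rw [← SetLike.mem_coe, ← hXw]; exact hv
    rw [hXw, hDof_coe, aux_span_eq hvne hv']
  have hX_ncard : ∀ X ∈ 𝓓, (X : Set (V ⧸ E)).ncard = q ^ n := by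
    intro X hX
    obtain ⟨w, hw, hXw⟩ := (hmemD_iff X).mp hX
    rw [hXw, aux_line_ncard w hw, hcardK]
  have hX0_ncard : ∀ X ∈ 𝓓, ((X : Set (V ⧸ E)) \ {0}).ncard = q ^ n - 1 := by
    intro X hX
    rw [Set.ncard_diff_singleton_of_mem (Submodule.zero_mem X), hX_ncard X hX]
  have hDdisj : ∀ X ∈ 𝓓, ∀ Y ∈ 𝓓, X ≠ Y →
      Disjoint ((X : Set (V ⧸ E)) \ {0}) ((Y : Set (V ⧸ E)) \ {0}) := by
    intro X hX Y hY hXY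
    rw [Set.disjoint_left]
    rintro v ⟨hvX, hv0⟩ ⟨hvY, _⟩
    rw [Set.mem_singleton_iff] at hv0
    exact hXY ((hD_eq X hX v hvX hv0).trans (hD_eq Y hY v hvY hv0).symm)
  have hcardW : (Set.univ : Set (V ⧸ E)).ncard = q ^ (n + m) := by
    haveI : Fintype (V ⧸ E) := Fintype.ofFinite _
    rw [Set.ncard_univ, Nat.card_eq_fintype_card, card_eq_pow_finrank (K := F), hfrQ, hF]
  have hDcount : 𝓓.ncard * (q ^ n - 1) = q ^ (n + m) - 1 := by
    have hun : ⋃ X ∈ 𝓓, ((X : Set (V ⧸ E)) \ {0}) = Set.univ \ {0} := by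
      ext v
      simp only [Set.mem_iUnion, Set.mem_diff, Set.mem_singleton_iff, Set.mem_univ, true_and,
        SetLike.mem_coe]
      constructor
      · rintro ⟨X, hX, _, hv0⟩; exact hv0
      · intro hv0
        refine ⟨Dof v, hDof_mem v hv0, ?_, hv0⟩
        exact Submodule.mem_span_singleton_self v
      
    have h1 := aux_partition_count 𝓓 (fun X => (X : Set (V ⧸ E)) \ {0}) (Set.univ \ {0})
      (q ^ n - 1) hDdisj hun hX0_ncard (Set.toFinite _)
    rw [Set.ncard_diff (by simp : {(0 : V ⧸ E)} ⊆ Set.univ), hcardW, Set.ncard_singleton] at h1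
    omega
  have hSinj : Set.InjOn (fun E' : Submodule F V => E'.map E.mkQ) (𝓔 \ {E}) := by
    rintro E₁ ⟨hE₁, hE₁ne⟩ E₂ ⟨hE₂, hE₂ne⟩ heq
    rw [Set.mem_singleton_iff] at hE₁ne hE₂ne
    by_contra hne
    have h3 : finrank F ↥(E₁ ⊔ E₂ ⊔ E) = 3 * n :=
      hspan3 E₁ hE₁ E₂ hE₂ E hE hne hE₁ne hE₂ne
    have hle : E₁ ⊔ E₂ ⊔ E ≤ E₂ ⊔ E := by
      refine sup_le (sup_le ?_ le_sup_left) le_sup_right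
      intro x hx
      have heq' : E₁.map E.mkQ = E₂.map E.mkQ := heq
      have hmem : E.mkQ x ∈ E₂.map E.mkQ := heq' ▸ Submodule.mem_map_of_mem hx
      obtain ⟨y, hy, hxy⟩ := hmem
      have hxyE : x - y ∈ E := by
        rw [← Submodule.ker_mkQ E, LinearMap.mem_ker, map_sub, hxy, sub_self]
      exact Submodule.mem_sup.mpr ⟨y, hy, x - y, hxyE, by abel⟩
    have h4 := Submodule.finrank_sup_add_finrank_inf_eq E₂ E
    have h5 := Submodule.finrank_mono hle
    rw [h3] at h5
    rw [hdimE E₂ hE₂, hEfr] at h4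
    omega
  have hScount : 𝓢.ncard = q ^ m := by
    rw [h𝓢, Set.ncard_image_of_injOn hSinj,
      Set.ncard_diff_singleton_of_mem hE, hcardE]
    omega
  have hq2n : 2 ≤ q ^ n := by
    calc 2 ≤ q := hq2
    _ = q ^ 1 := (pow_one q).symm
    _ ≤ q ^ n := Nat.pow_le_pow_right (by omega) hn
  have hCcount : (𝓓 \ 𝓢).ncard * (q ^ n - 1) = q ^ m - 1 := by
    have h1 : (𝓓 \ 𝓢).ncard = 𝓓.ncard - q ^ m := by
      rw [Set.ncard_diff hsub, hScount]
    have hpow : q ^ m * q ^ n = q ^ (n + m) := by rw [← pow_add, add_comm]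
    have hqm2 : 2 ≤ q ^ m := by
      calc 2 ≤ q := hq2
      _ = q ^ 1 := (pow_one q).symm
      _ ≤ q ^ m := Nat.pow_le_pow_right (by omega) (by omega)
    have h2 : (𝓓.ncard - q ^ m) * (q ^ n - 1) = 𝓓.ncard * (q ^ n - 1) - q ^ m * (q ^ n - 1) :=
      Nat.sub_mul _ _ _
    have h3 : q ^ m * (q ^ n - 1) = q ^ (n + m) - q ^ m := by
      rw [Nat.mul_sub, hpow, mul_one]
    have h4 : q ^ m ≤ q ^ (n + m) := Nat.pow_le_pow_right (by omega) (by omega)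
    rw [h1, h2, hDcount, h3]
    omega
  have hpart1 : (𝓓 \ 𝓢).ncard = (q ^ m - 1) / (q ^ n - 1) := by
    rw [← hCcount, Nat.mul_div_cancel _ (by omega : 0 < q ^ n - 1)]
  -- a uniform way to obtain F-finrank from cardinality
  have hfrF : ∀ (S : Submodule F (V ⧸ E)) (k : ℕ),
      (S : Set (V ⧸ E)).ncard = q ^ k → finrank F S = k := by
    intro S k hk
    haveI : Fintype S := Fintype.ofFinite _
    apply Nat.pow_right_injective hq2
    show q ^ finrank F S = q ^ k
    rw [← hF]
    rw [← card_eq_pow_finrank (K := F) (V := S), hF]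
    rw [← hk, ← Nat.card_coe_set_eq]
    exact Nat.card_eq_fintype_card.symm
  -- goodness transferred to planes
  have hgood' : ∀ P : Submodule fs.K (V ⧸ E), finrank fs.K P = 2 →
      (∃ X₁ ∈ 𝓢, ∃ X₂ ∈ 𝓢, X₁ ≠ X₂ ∧ (X₁ : Set (V ⧸ E)) ⊆ (P : Set (V ⧸ E)) ∧
        (X₂ : Set (V ⧸ E)) ⊆ (P : Set (V ⧸ E))) →
      {X ∈ 𝓢 | (X : Set (V ⧸ E)) ⊆ (P : Set (V ⧸ E))}.ncard = q ^ n := by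
    intro P hP2 hex
    obtain ⟨X₁, hX₁S, X₂, hX₂S, hX12, hX₁P, hX₂P⟩ := hex
    set P' : Submodule F (V ⧸ E) := P.restrictScalars F with hP'def
    have hP'coe : (P' : Set (V ⧸ E)) = (P : Set (V ⧸ E)) := rfl
    set W3 : Submodule F V := P'.comap E.mkQ with hW3def
    have hEW3 : E ≤ W3 := by
      intro x hx
      have : E.mkQ x = 0 := by
        rw [← LinearMap.mem_ker, Submodule.ker_mkQ]; exact hx
      simp only [hW3def, Submodule.mem_comap, this]
      exact Submodule.zero_mem _
    have hmapW3 : W3.map E.mkQ = P' := by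
      rw [hW3def, Submodule.map_comap_eq, Submodule.range_mkQ, top_inf_eq]
    have hP'fr : finrank F P' = 2 * n := by
      apply hfrF
      rw [hP'coe, aux_sub_ncard, hcardK, hP2, ← pow_mul, mul_comm]
    have hW3fr : finrank F W3 = 3 * n := by
      have e := Submodule.quotientQuotientEquivQuotient E W3 hEW3
      rw [hmapW3] at e
      have h1 : finrank F ((V ⧸ E) ⧸ P') = finrank F (V ⧸ W3) := LinearEquiv.finrank_eq e
      have h2 := Submodule.finrank_quotient_add_finrank P'
      have h3 := Submodule.finrank_quotient_add_finrank W3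
      rw [hP'fr, hfrQ] at h2
      rw [hV, ← h1] at h3
      omega
    -- translate mem-of-𝓢-in-P to egg elements in W3
    have hSP : {X ∈ 𝓢 | (X : Set (V ⧸ E)) ⊆ (P : Set (V ⧸ E))} =
        (fun E' : Submodule F V => E'.map E.mkQ) '' ({E' ∈ 𝓔 | E' ≤ W3} \ {E}) := by
      ext X
      simp only [Set.mem_setOf_eq, Set.mem_image, Set.mem_diff, Set.mem_singleton_iff]
      constructor
      · rintro ⟨hXS, hXP⟩
        rw [h𝓢] at hXS
        obtain ⟨E', ⟨hE'𝓔, hE'ne⟩, rfl⟩ := hXS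
        rw [Set.mem_singleton_iff] at hE'ne
        refine ⟨E', ⟨⟨hE'𝓔, ?_⟩, hE'ne⟩, rfl⟩
        rw [hW3def, ← Submodule.map_le_iff_le_comap]
        rw [← SetLike.coe_subset_coe, hP'coe]
        exact hXP
      · rintro ⟨E', ⟨⟨hE'𝓔, hE'W3⟩, hE'ne⟩, rfl⟩
        constructor
        · rw [h𝓢]; exact ⟨E', ⟨hE'𝓔, by simpa using hE'ne⟩, rfl⟩
        · have : E'.map E.mkQ ≤ P' := hmapW3 ▸ Submodule.map_mono hE'W3
          rw [← SetLike.coe_subset_coe, hP'coe] at this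
          exact this
    -- find two distinct egg elements in W3 besides E
    have hgoal : {E' ∈ 𝓔 | E' ≤ W3}.ncard = q ^ n + 1 := by
      apply hgood W3 hW3fr hEW3
      rw [h𝓢] at hX₁S hX₂S
      obtain ⟨E₁, ⟨hE₁𝓔, hE₁ne⟩, rfl⟩ := hX₁S
      obtain ⟨E₂, ⟨hE₂𝓔, hE₂ne⟩, rfl⟩ := hX₂S
      rw [Set.mem_singleton_iff] at hE₁ne hE₂ne
      refine ⟨E₁, hE₁𝓔, E₂, hE₂𝓔, hE₁ne, hE₂ne, fun h => hX12 (by rw [h]), ?_, ?_⟩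
      · rw [hW3def, ← Submodule.map_le_iff_le_comap, ← SetLike.coe_subset_coe, hP'coe]
        exact hX₁P
      · rw [hW3def, ← Submodule.map_le_iff_le_comap, ← SetLike.coe_subset_coe, hP'coe]
        exact hX₂P
    rw [hSP, Set.ncard_image_of_injOn (hSinj.mono ?_), Set.ncard_diff_singleton_of_mem ?_,
      hgoal]
    · omega
    · simp only [Set.mem_setOf_eq]; exact ⟨hE, hEW3⟩
    · intro x hx; exact ⟨hx.1.1, hx.2⟩
  -- number of lines in a plane
  have hlinesP : ∀ P : Submodule fs.K (V ⧸ E), finrank fs.K P = 2 →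
      {X ∈ 𝓓 | (X : Set (V ⧸ E)) ⊆ (P : Set (V ⧸ E))}.ncard = q ^ n + 1 := by
    intro P hP2
    have hun : ⋃ X ∈ {X ∈ 𝓓 | (X : Set (V ⧸ E)) ⊆ (P : Set (V ⧸ E))},
        ((X : Set (V ⧸ E)) \ {0}) = (P : Set (V ⧸ E)) \ {0} := by
      ext v
      simp only [Set.mem_iUnion, Set.mem_diff, Set.mem_singleton_iff, Set.mem_setOf_eq,
        SetLike.mem_coe]
      constructor
      · rintro ⟨X, ⟨hXD, hXP⟩, hvX, hv0⟩
        exact ⟨hXP hvX, hv0⟩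
      · rintro ⟨hvP, hv0⟩
        refine ⟨Dof v, ⟨hDof_mem v hv0, ?_⟩, Submodule.mem_span_singleton_self v, hv0⟩
        rw [hDof_coe]
        exact Set.Subset.trans (SetLike.coe_subset_coe.mpr
          ((Submodule.span_singleton_le_iff_mem v P).mpr hvP)) (le_refl _)
    have h1 := aux_partition_count {X ∈ 𝓓 | (X : Set (V ⧸ E)) ⊆ (P : Set (V ⧸ E))}
      (fun X => (X : Set (V ⧸ E)) \ {0}) ((P : Set (V ⧸ E)) \ {0}) (q ^ n - 1)
      (fun X hX Y hY => hDdisj X hX.1 Y hY.1) hun (fun X hX => hX0_ncard X hX.1)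
      (Set.toFinite _)
    have hPcard : (P : Set (V ⧸ E)).ncard = q ^ (2 * n) := by
      rw [aux_sub_ncard, hcardK, hP2, ← pow_mul, mul_comm]
    have h2 : ((P : Set (V ⧸ E)) \ {0}).ncard = q ^ (2 * n) - 1 := by
      rw [Set.ncard_diff_singleton_of_mem (Submodule.zero_mem P), hPcard]
    have h3 : (q ^ n + 1) * (q ^ n - 1) = q ^ (2 * n) - 1 := by
      rw [aux_sq_sub_one _ (by omega : 1 ≤ q ^ n), ← pow_add, two_mul]
    apply Nat.eq_of_mul_eq_mul_right (by omega : 0 < q ^ n - 1)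
    rw [← h1, h2, h3]
  have hmemDof : ∀ w v : V ⧸ E, v ∈ (fs.K ∙ w : Submodule fs.K (V ⧸ E)) → v ∈ Dof w :=
    fun w v h => h
  have hnotS : ∀ X ∈ 𝓓 \ 𝓢, ∀ w : V ⧸ E, w ≠ 0 →
      (X : Set (V ⧸ E)) = ((fs.K ∙ w : Submodule fs.K (V ⧸ E)) : Set (V ⧸ E)) →
      ∀ t : V ⧸ E, t ≠ 0 → Dof t ∈ 𝓢 → w ∉ (fs.K ∙ t : Submodule fs.K (V ⧸ E)) := by
    intro X hX w hw hXw t ht htS hmem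
    have hXt : X = Dof t := by
      apply SetLike.coe_injective
      rw [hXw, hDof_coe, aux_span_eq hw hmem]
    exact hX.2 (hXt ▸ htS)
  have hkey : ∀ t : V ⧸ E, t ≠ 0 → Dof t ∈ 𝓢 → ∀ P : Submodule fs.K (V ⧸ E),
      (fs.K ∙ t) ≤ P → finrank fs.K P = 2 →
      {X ∈ 𝓓 \ 𝓢 | (X : Set (V ⧸ E)) ⊆ (P : Set (V ⧸ E))}.ncard = 1 := by
    intro t ht htS
    set Pl : Set (Submodule fs.K (V ⧸ E)) :=
      {P | (fs.K ∙ t) ≤ P ∧ finrank fs.K P = 2} with hPldef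
    have hCPne : ∀ P ∈ Pl,
        {X ∈ 𝓓 \ 𝓢 | (X : Set (V ⧸ E)) ⊆ (P : Set (V ⧸ E))}.Nonempty := by
      intro P hP
      rw [Set.nonempty_iff_ne_empty]
      intro hemp
      have hLP := hlinesP P hP.2
      have hLsplit : {X ∈ 𝓓 | (X : Set (V ⧸ E)) ⊆ (P : Set (V ⧸ E))} =
          {X ∈ 𝓢 | (X : Set (V ⧸ E)) ⊆ (P : Set (V ⧸ E))} := by
        ext X
        constructor
        · rintro ⟨hXD, hXP⟩
          by_cases hXS : X ∈ 𝓢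
          · exact ⟨hXS, hXP⟩
          · exact absurd (Set.eq_empty_iff_forall_notMem.mp hemp X)
              (fun hcon => hcon ⟨⟨hXD, hXS⟩, hXP⟩)
        · rintro ⟨hXS, hXP⟩
          exact ⟨hsub hXS, hXP⟩
      rw [hLsplit] at hLP
      have h2 : 1 < {X ∈ 𝓢 | (X : Set (V ⧸ E)) ⊆ (P : Set (V ⧸ E))}.ncard := by
        rw [hLP]; omega
      obtain ⟨X₁, hX₁, X₂, hX₂, hne⟩ := (Set.one_lt_ncard (Set.toFinite _)).mp h2
      have hgp := hgood' P hP.2 ⟨X₁, hX₁.1, X₂, hX₂.1, hne, hX₁.2, hX₂.2⟩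
      rw [hgp] at hLP
      omega
    have hspan_t_ncard : ((fs.K ∙ t : Submodule fs.K (V ⧸ E)) : Set (V ⧸ E)).ncard = q ^ n := by
      rw [aux_line_ncard t ht, hcardK]
    have hPlcount : Pl.ncard * (q ^ (2 * n) - q ^ n) = q ^ (n + m) - q ^ n := by
      have hun : ⋃ P ∈ Pl, ((P : Set (V ⧸ E)) \
          ((fs.K ∙ t : Submodule fs.K (V ⧸ E)) : Set (V ⧸ E))) =
          Set.univ \ ((fs.K ∙ t : Submodule fs.K (V ⧸ E)) : Set (V ⧸ E)) := by
        ext z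
        simp only [Set.mem_iUnion, Set.mem_diff, Set.mem_univ, true_and, SetLike.mem_coe]
        constructor
        · rintro ⟨P, hP, _, hz⟩; exact hz
        · intro hz
          exact ⟨(fs.K ∙ t) ⊔ (fs.K ∙ z), ⟨le_sup_left, aux_plane_finrank ht hz⟩,
            Submodule.mem_sup_right (Submodule.mem_span_singleton_self z), hz⟩
      have hdisj : ∀ P ∈ Pl, ∀ Q ∈ Pl, P ≠ Q →
          Disjoint ((P : Set (V ⧸ E)) \ ((fs.K ∙ t : Submodule fs.K (V ⧸ E)) : Set (V ⧸ E)))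
            ((Q : Set (V ⧸ E)) \ ((fs.K ∙ t : Submodule fs.K (V ⧸ E)) : Set (V ⧸ E))) := by
        intro P hP Q hQ hPQ
        rw [Set.disjoint_left]
        rintro z ⟨hzP, hzt⟩ ⟨hzQ, _⟩
        rw [SetLike.mem_coe] at hzP hzQ
        have hzt' : z ∉ (fs.K ∙ t : Submodule fs.K (V ⧸ E)) := fun h => hzt h
        exact hPQ ((aux_plane_eq ht hzt' P hP.1 hP.2 hzP).trans
          (aux_plane_eq ht hzt' Q hQ.1 hQ.2 hzQ).symm)
      have hc : ∀ P ∈ Pl, ((P : Set (V ⧸ E)) \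
          ((fs.K ∙ t : Submodule fs.K (V ⧸ E)) : Set (V ⧸ E))).ncard =
          q ^ (2 * n) - q ^ n := by
        intro P hP
        rw [Set.ncard_diff (SetLike.coe_subset_coe.mpr hP.1), hspan_t_ncard,
          aux_sub_ncard, hcardK, hP.2, ← pow_mul, mul_comm]
      have h1 := aux_partition_count Pl _ _ (q ^ (2 * n) - q ^ n) hdisj hun hc (Set.toFinite _)
      rw [Set.ncard_diff (Set.subset_univ _), hcardW, hspan_t_ncard] at h1
      omega
    have hPlC : Pl.ncard = (𝓓 \ 𝓢).ncard := by
      have e1 : q ^ (2 * n) - q ^ n = q ^ n * (q ^ n - 1) := by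
        rw [Nat.mul_sub, mul_one, ← pow_add, two_mul]
      have e2 : q ^ (n + m) - q ^ n = q ^ n * (q ^ m - 1) := by
        rw [Nat.mul_sub, mul_one, ← pow_add]
      rw [e1, e2] at hPlcount
      apply Nat.eq_of_mul_eq_mul_right (by omega : 0 < q ^ n - 1)
      apply Nat.eq_of_mul_eq_mul_left (by omega : 0 < q ^ n)
      rw [hCcount]
      calc q ^ n * (Pl.ncard * (q ^ n - 1)) = Pl.ncard * (q ^ n * (q ^ n - 1)) := by ring
      _ = q ^ n * (q ^ m - 1) := hPlcount
    have hCun : ⋃ P ∈ Pl, {X ∈ 𝓓 \ 𝓢 | (X : Set (V ⧸ E)) ⊆ (P : Set (V ⧸ E))} = 𝓓 \ 𝓢 := by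
      ext X
      simp only [Set.mem_iUnion, Set.mem_setOf_eq]
      constructor
      · rintro ⟨P, hP, hX, _⟩; exact hX
      · intro hX
        obtain ⟨w, hw, hXw⟩ := (hmemD_iff X).mp hX.1
        have hwt : w ∉ (fs.K ∙ t : Submodule fs.K (V ⧸ E)) :=
          hnotS X hX w hw hXw t ht htS
        refine ⟨(fs.K ∙ t) ⊔ (fs.K ∙ w), ⟨le_sup_left, aux_plane_finrank ht hwt⟩, hX, ?_⟩
        rw [hXw]
        exact SetLike.coe_subset_coe.mpr le_sup_right
    have hCdisj : ∀ P ∈ Pl, ∀ Q ∈ Pl, P ≠ Q →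
        Disjoint {X ∈ 𝓓 \ 𝓢 | (X : Set (V ⧸ E)) ⊆ (P : Set (V ⧸ E))}
          {X ∈ 𝓓 \ 𝓢 | (X : Set (V ⧸ E)) ⊆ (Q : Set (V ⧸ E))} := by
      intro P hP Q hQ hPQ
      rw [Set.disjoint_left]
      rintro X ⟨hXC, hXP⟩ ⟨_, hXQ⟩
      obtain ⟨w, hw, hXw⟩ := (hmemD_iff X).mp hXC.1
      have hwt : w ∉ (fs.K ∙ t : Submodule fs.K (V ⧸ E)) :=
        hnotS X hXC w hw hXw t ht htS
      have hwX : w ∈ (X : Set (V ⧸ E)) := by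
        rw [hXw]; exact Submodule.mem_span_singleton_self w
      have hwP : w ∈ P := hXP hwX
      have hwQ : w ∈ Q := hXQ hwX
      exact hPQ ((aux_plane_eq ht hwt P hP.1 hP.2 hwP).trans
        (aux_plane_eq ht hwt Q hQ.1 hQ.2 hwQ).symm)
    have hones := aux_partition_ones Pl
      (fun P => {X ∈ 𝓓 \ 𝓢 | (X : Set (V ⧸ E)) ⊆ (P : Set (V ⧸ E))})
      hCdisj hCPne (Set.toFinite _) (fun P _ => Set.toFinite _) (by rw [hCun, hPlC])
    intro P hPt hP2
    exact hones P ⟨hPt, hP2⟩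
  -- the union of the complement
  have hCne : (𝓓 \ 𝓢).Nonempty := by
    rw [Set.nonempty_iff_ne_empty]
    intro h
    rw [h, Set.ncard_empty] at hCcount
    have h2 : 2 ≤ q ^ m := by
      calc 2 ≤ q := hq2
      _ = q ^ 1 := (pow_one q).symm
      _ ≤ q ^ m := Nat.pow_le_pow_right (by omega) (by omega)
    omega
  set T : Set (V ⧸ E) := ⋃ X ∈ 𝓓 \ 𝓢, (X : Set (V ⧸ E)) with hTdef
  have hmemT : ∀ v : V ⧸ E, v ∈ T ↔ ∃ X ∈ 𝓓 \ 𝓢, v ∈ X := by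
    intro v
    simp only [hTdef, Set.mem_iUnion, SetLike.mem_coe, exists_prop]
  have hT0 : (0 : V ⧸ E) ∈ T := by
    obtain ⟨X, hX⟩ := hCne
    exact (hmemT 0).mpr ⟨X, hX, Submodule.zero_mem X⟩
  have hTadd : ∀ x ∈ T, ∀ y ∈ T, x + y ∈ T := by
    intro x hx y hy
    obtain ⟨X, hX, hxX⟩ := (hmemT x).mp hx
    obtain ⟨Y, hY, hyY⟩ := (hmemT y).mp hy
    by_cases hx0 : x = 0
    · rw [hx0, zero_add]; exact hy
    by_cases hy0 : y = 0
    · rw [hy0, add_zero]; exact hx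
    have hXx : X = Dof x := hD_eq X hX.1 x hxX hx0
    have hYy : Y = Dof y := hD_eq Y hY.1 y hyY hy0
    by_cases hyx : y ∈ (fs.K ∙ x : Submodule fs.K (V ⧸ E))
    · refine (hmemT _).mpr ⟨X, hX, ?_⟩
      rw [hXx]
      exact hmemDof x _ (Submodule.add_mem _ (Submodule.mem_span_singleton_self x) hyx)
    · by_cases hxy0 : x + y = 0
      · rw [hxy0]; exact hT0
      by_cases hzS : Dof (x + y) ∈ 𝓢
      · exfalso
        set P : Submodule fs.K (V ⧸ E) := (fs.K ∙ x) ⊔ (fs.K ∙ y) with hPdef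
        have hxP : x ∈ P := Submodule.mem_sup_left (Submodule.mem_span_singleton_self x)
        have hyP : y ∈ P := Submodule.mem_sup_right (Submodule.mem_span_singleton_self y)
        have hP2 : finrank fs.K P = 2 := aux_plane_finrank hx0 hyx
        have hzP : (fs.K ∙ (x + y)) ≤ P := by
          rw [Submodule.span_singleton_le_iff_mem]
          exact Submodule.add_mem _ hxP hyP
        have h1 := hkey (x + y) hxy0 hzS P hzP hP2
        have hXP : (X : Set (V ⧸ E)) ⊆ (P : Set (V ⧸ E)) := by
          rw [hXx, hDof_coe]
          exact SetLike.coe_subset_coe.mpr (le_sup_left : (fs.K ∙ x) ≤ P)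
        have hYP : (Y : Set (V ⧸ E)) ⊆ (P : Set (V ⧸ E)) := by
          rw [hYy, hDof_coe]
          exact SetLike.coe_subset_coe.mpr (le_sup_right : (fs.K ∙ y) ≤ P)
        have hXY : X ≠ Y := by
          rw [hXx, hYy]
          intro h
          have hsp : (fs.K ∙ x : Submodule fs.K (V ⧸ E)) = fs.K ∙ y :=
            Submodule.restrictScalars_injective F _ _ h
          exact hyx (hsp.symm ▸ Submodule.mem_span_singleton_self y)
        have h2 : 1 < {Z ∈ 𝓓 \ 𝓢 | (Z : Set (V ⧸ E)) ⊆ (P : Set (V ⧸ E))}.ncard :=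
          (Set.one_lt_ncard (Set.toFinite _)).mpr ⟨X, ⟨hX, hXP⟩, Y, ⟨hY, hYP⟩, hXY⟩
        omega
      · exact (hmemT _).mpr ⟨Dof (x + y), ⟨hDof_mem _ hxy0, hzS⟩,
          hmemDof _ _ (Submodule.mem_span_singleton_self _)⟩
  set U : Submodule F (V ⧸ E) :=
    { carrier := T
      add_mem' := fun {a} {b} ha hb => hTadd a ha b hb
      zero_mem' := hT0
      smul_mem' := by
        intro c x hx
        obtain ⟨X, hX, hxX⟩ := (hmemT x).mp hx
        exact (hmemT _).mpr ⟨X, hX, Submodule.smul_mem X c hxX⟩ } with hUdef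
  have hUcoe : (U : Set (V ⧸ E)) = T := rfl
  have hsSupU : sSup (𝓓 \ 𝓢) = U := by
    apply le_antisymm
    · apply sSup_le
      intro X hX x hx
      exact (hmemT x).mpr ⟨X, hX, hx⟩
    · intro x hx
      obtain ⟨X, hX, hxX⟩ := (hmemT x).mp hx
      exact (le_sSup hX) hxX
  have hTcard : T.ncard = q ^ m := by
    have hT' : T = insert 0 (⋃ X ∈ 𝓓 \ 𝓢, ((X : Set (V ⧸ E)) \ {0})) := by
      ext v
      simp only [Set.mem_insert_iff, Set.mem_iUnion, Set.mem_diff, Set.mem_singleton_iff,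
        SetLike.mem_coe]
      constructor
      · intro hv
        obtain ⟨X, hX, hvX⟩ := (hmemT v).mp hv
        by_cases hv0 : v = 0
        · exact Or.inl hv0
        · exact Or.inr ⟨X, hX, hvX, hv0⟩
      · rintro (rfl | ⟨X, hX, hvX, _⟩)
        · exact hT0
        · exact (hmemT v).mpr ⟨X, hX, hvX⟩
    have hcu := aux_partition_count (𝓓 \ 𝓢) (fun X => (X : Set (V ⧸ E)) \ {0}) _ (q ^ n - 1)
      (fun X hX Y hY => hDdisj X (hX.1) Y (hY.1)) rfl (fun X hX => hX0_ncard X hX.1)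
      (Set.toFinite _)
    have h0 : (0 : V ⧸ E) ∉ ⋃ X ∈ 𝓓 \ 𝓢, ((X : Set (V ⧸ E)) \ {0}) := by simp
    have h2 : 2 ≤ q ^ m := by
      calc 2 ≤ q := hq2
      _ = q ^ 1 := (pow_one q).symm
      _ ≤ q ^ m := Nat.pow_le_pow_right (by omega) (by omega)
    rw [hT', Set.ncard_insert_of_notMem h0, hcu, hCcount]
    omega
  refine ⟨hpart1, ?_⟩
  rw [hsSupU]
  exact hfrF U m (by rw [hUcoe, hTcard])
end

section
/- Let q be a prime power, let n and m be positive integers with m > n, let 𝓔 be a weak egg in a (2n+m)-dimensional vector space V over the finite field F with exactly q elements that is good at an element E₁ ∈ 𝓔, and let E₂ ∈ 𝓔 \ {E₁}. Let 𝓣 = {E₁ ⊔ E₂ ⊔ E : E ∈ 𝓔 \ {E₁, E₂}} be the set of subspaces spanned by E₁, E₂ and a further element of 𝓔. Then every member of 𝓣 is a 3n-dimensional subspace containing exactly q^n + 1 elements of 𝓔, any two distinct members of 𝓣 intersect exactly in the subspace E₁ ⊔ E₂, and 𝓣 has exactly (q^m − 1)/(q^n − 1) members. -/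
open Submodule Module

/-!
Fix `E₁ ≠ E₂` in the pseudo-cap and let `P = E₁ ⊔ E₂`. Each member of the pencil `𝓣` is
`3n`-dimensional and is determined by any further element of `𝓔` it contains, so the sets
`{E ∈ 𝓔 | E ≤ T} \ {E₁, E₂}` (`T ∈ 𝓣`), each of size `q^n - 1` by goodness, partition
`𝓔 \ {E₁, E₂}`; this gives `q^m - 1 = |𝓣| (q^n - 1)`.

If two members `T₁ ≠ T₂` met in some `S > P`, say `dim S = w` with `2n < w < 3n`, then each of
the `2(q^n - 1)` elements `A` of `𝓔` in `T₁` or `T₂` other than `E₁, E₂` cuts out the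
`(w - n)`-space `(A ⊔ E₁) ⊓ S`. Since any three elements of `𝓔` span `3n` dimensions, these
spaces meet pairwise, and meet `P`, only in `E₁`; counting vectors of `S \ P` gives
`2 (q^n - 1) (q^(w-n) - q^n) ≤ q^w - q^(2n)`, which fails because `q^n > 2`.
-/

theorem Set.ncard_biUnion_of_ncard_eq {α ι : Type*} [Finite α] {t : Set ι} (ht : t.Finite)
    {s : ι → Set α} (hs : t.PairwiseDisjoint s) {k : ℕ} (hk : ∀ i ∈ t, (s i).ncard = k) :
    (⋃ i ∈ t, s i).ncard = t.ncard * k := by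
  rw [ht.ncard_biUnion (fun i _ => Set.toFinite _) hs, finsum_mem_congr rfl hk,
    finsum_mem_eq_finite_toFinset_sum _ ht, Finset.sum_const, smul_eq_mul,
    Set.ncard_eq_toFinset_card t ht]

theorem Set.ncard_sdiff_pair {α : Type*} {s : Set α} {a b : α} (ha : a ∈ s) (hb : b ∈ s)
    (hab : a ≠ b) : (s \ {a, b}).ncard = s.ncard - 2 := by
  rw [Set.ncard_sdiff (Set.insert_subset ha (Set.singleton_subset_iff.2 hb)),
    Set.ncard_pair hab]

theorem pow_sub_pow_lt_two_mul {q n w : ℕ} (hq : 2 ≤ q) (hw₁ : 2 * n < w) (hw₂ : w < 3 * n) :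
    q ^ w - q ^ (2 * n) < 2 * (q ^ n - 1) * (q ^ (w - n) - q ^ n) := by
  have hs : 2 ^ 2 ≤ q ^ n :=
    (Nat.pow_le_pow_right two_pos (by omega)).trans (Nat.pow_le_pow_left hq n)
  have hsb : q ^ w - q ^ (2 * n) = q ^ n * (q ^ (w - n) - q ^ n) := by
    rw [Nat.mul_sub, ← pow_add, ← pow_add, Nat.add_sub_cancel' (by omega), two_mul]
  have hb : q ^ n < q ^ (w - n) := Nat.pow_lt_pow_right hq (by omega)
  rw [hsb]
  exact Nat.mul_lt_mul_of_pos_right (by omega) (by omega)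

namespace Submodule

variable {F V : Type*} [Field F] [AddCommGroup V] [Module F V] [FiniteDimensional F V]

theorem ncard_coe_eq_pow_finrank (U : Submodule F V) :
    (U : Set V).ncard = Nat.card F ^ finrank F U := by
  rw [← Nat.card_coe_set_eq]
  exact Module.natCard_eq_pow_finrank (K := F) (V := U)

theorem ncard_coe_sdiff_coe [Finite F] {U W : Submodule F V} (h : U ≤ W) :
    ((W : Set V) \ U).ncard = Nat.card F ^ finrank F W - Nat.card F ^ finrank F U := by
  have := Module.finite_of_finite F (M := V)
  rw [Set.ncard_sdiff (SetLike.coe_subset_coe.2 h), ncard_coe_eq_pow_finrank,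
    ncard_coe_eq_pow_finrank]

/-- Count the vectors of `S \ P` lying in the disjoint sets `f i \ E`. -/
theorem ncard_mul_le_of_pairwise_inf_le [Finite F] {ι : Type*} {t : Set ι} (ht : t.Finite)
    {f : ι → Submodule F V} {E P S : Submodule F V} {k : ℕ} (hPS : P ≤ S)
    (hE : ∀ i ∈ t, E ≤ f i) (hS : ∀ i ∈ t, f i ≤ S) (hP : ∀ i ∈ t, f i ⊓ P ≤ E)
    (hf : t.Pairwise fun i j => f i ⊓ f j ≤ E) (hk : ∀ i ∈ t, finrank F (f i) = k) :
    t.ncard * (Nat.card F ^ k - Nat.card F ^ finrank F E) ≤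
      Nat.card F ^ finrank F S - Nat.card F ^ finrank F P := by
  have := Module.finite_of_finite F (M := V)
  have hdisj : t.PairwiseDisjoint fun i => (f i : Set V) \ E := fun i hi j hj hij =>
    Set.disjoint_left.2 fun x hxi hxj => hxi.2 (hf hi hj hij ⟨hxi.1, hxj.1⟩)
  have hsub : (⋃ i ∈ t, (f i : Set V) \ E) ⊆ (S : Set V) \ P :=
    Set.iUnion₂_subset fun i hi x hx => ⟨hS i hi hx.1, fun hxP => hx.2 (hP i hi ⟨hx.1, hxP⟩)⟩
  calc t.ncard * _ = (⋃ i ∈ t, (f i : Set V) \ E).ncard :=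
        (Set.ncard_biUnion_of_ncard_eq ht hdisj fun i hi => by
          rw [ncard_coe_sdiff_coe (hE i hi), hk i hi]).symm
    _ ≤ ((S : Set V) \ P).ncard := Set.ncard_le_ncard hsub
    _ = _ := ncard_coe_sdiff_coe hPS

end Submodule

section Pencil

variable {n : ℕ} {F V : Type*} [Field F] [AddCommGroup V] [Module F V]

def pencil (C : Set (Submodule F V)) (E₁ E₂ : Submodule F V) : Set (Submodule F V) :=
  (fun E => E₁ ⊔ E₂ ⊔ E) '' (C \ {E₁, E₂})

variable {C : Set (Submodule F V)} {A B E E₁ E₂ S T T₁ T₂ : Submodule F V}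

theorem mem_pencil :
    T ∈ pencil C E₁ E₂ ↔ ∃ E ∈ C, E ≠ E₁ ∧ E ≠ E₂ ∧ E₁ ⊔ E₂ ⊔ E = T := by
  simp only [pencil, Set.mem_image, Set.mem_sdiff, Set.mem_insert_iff, Set.mem_singleton_iff,
    not_or, and_assoc]

theorem sup_le_of_mem_pencil (hT : T ∈ pencil C E₁ E₂) : E₁ ⊔ E₂ ≤ T := by
  obtain ⟨E, -, -, -, rfl⟩ := mem_pencil.1 hT
  exact le_sup_left

theorem ncard_sep_le_sdiff_pair (hE₁ : E₁ ∈ C) (hE₂ : E₂ ∈ C) (h12 : E₁ ≠ E₂)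
    (hcount : ∀ T ∈ pencil C E₁ E₂, {E ∈ C | E ≤ T}.ncard = Nat.card F ^ n + 1)
    (hT : T ∈ pencil C E₁ E₂) :
    ({E ∈ C | E ≤ T} \ {E₁, E₂}).ncard = Nat.card F ^ n - 1 := by
  have hPT := sup_le_of_mem_pencil hT
  rw [Set.ncard_sdiff_pair (s := {E ∈ C | E ≤ T}) ⟨hE₁, le_sup_left.trans hPT⟩
    ⟨hE₂, le_sup_right.trans hPT⟩ h12, hcount T hT]
  omega

namespace IsPseudoCap

theorem finrank_of_mem_pencil (hC : IsPseudoCap n C) (hE₁ : E₁ ∈ C) (hE₂ : E₂ ∈ C)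
    (h12 : E₁ ≠ E₂) (hT : T ∈ pencil C E₁ E₂) : finrank F T = 3 * n := by
  obtain ⟨E, hE, h1, h2, rfl⟩ := mem_pencil.1 hT
  exact hC.2 E₁ hE₁ E₂ hE₂ E hE h12 h1.symm h2.symm

variable [FiniteDimensional F V]

theorem finrank_sup (hC : IsPseudoCap n C) (hA : A ∈ C) (hB : B ∈ C) (hE : E ∈ C)
    (hAB : A ≠ B) (hAE : A ≠ E) (hBE : B ≠ E) : finrank F ↥(A ⊔ B) = 2 * n := by
  have h1 := Submodule.finrank_add_le_finrank_add_finrank A B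
  have h2 := Submodule.finrank_add_le_finrank_add_finrank (A ⊔ B) E
  rw [hC.1 A hA, hC.1 B hB] at h1
  rw [hC.1 E hE, hC.2 A hA B hB E hE hAB hAE hBE] at h2
  omega

theorem sup_inf_sup_eq (hC : IsPseudoCap n C) (hA : A ∈ C) (hB : B ∈ C) (hE : E ∈ C)
    (hAB : A ≠ B) (hAE : A ≠ E) (hBE : B ≠ E) : (A ⊔ E) ⊓ (B ⊔ E) = E := by
  have h := Submodule.finrank_sup_add_finrank_inf_eq (A ⊔ E) (B ⊔ E)
  rw [← sup_sup_distrib_right, hC.2 A hA B hB E hE hAB hAE hBE,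
    hC.finrank_sup hA hE hB hAE hAB hBE.symm, hC.finrank_sup hB hE hA hBE hAB.symm hAE.symm] at h
  refine (Submodule.eq_of_le_of_finrank_le (le_inf le_sup_right le_sup_right) ?_).symm
  rw [hC.1 E hE]
  omega

theorem sup_sup_eq_of_le (hC : IsPseudoCap n C) (hE₁ : E₁ ∈ C) (hE₂ : E₂ ∈ C) (hA : A ∈ C)
    (h12 : E₁ ≠ E₂) (h1 : A ≠ E₁) (h2 : A ≠ E₂) (hT : finrank F T = 3 * n)
    (hPT : E₁ ⊔ E₂ ≤ T) (hAT : A ≤ T) : E₁ ⊔ E₂ ⊔ A = T :=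
  Submodule.eq_of_le_of_finrank_le (sup_le hPT hAT) <| by
    rw [hT, hC.2 E₁ hE₁ E₂ hE₂ A hA h12 h1.symm h2.symm]

theorem pairwiseDisjoint_pencil (hC : IsPseudoCap n C) (hE₁ : E₁ ∈ C) (hE₂ : E₂ ∈ C)
    (h12 : E₁ ≠ E₂) :
    (pencil C E₁ E₂).PairwiseDisjoint fun T => {E ∈ C | E ≤ T} \ {E₁, E₂} := by
  intro T₁ hT₁ T₂ hT₂ hT
  refine Set.disjoint_left.2 fun A hA₁ hA₂ => hT ?_
  simp only [Set.mem_sdiff, Set.mem_sep_iff, Set.mem_insert_iff, Set.mem_singleton_iff,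
    not_or] at hA₁ hA₂
  rw [← hC.sup_sup_eq_of_le hE₁ hE₂ hA₁.1.1 h12 hA₁.2.1 hA₁.2.2
      (hC.finrank_of_mem_pencil hE₁ hE₂ h12 hT₁) (sup_le_of_mem_pencil hT₁) hA₁.1.2,
    hC.sup_sup_eq_of_le hE₁ hE₂ hA₂.1.1 h12 hA₂.2.1 hA₂.2.2
      (hC.finrank_of_mem_pencil hE₁ hE₂ h12 hT₂) (sup_le_of_mem_pencil hT₂) hA₂.1.2]

theorem finrank_sup_inf_add (hC : IsPseudoCap n C) (hE₁ : E₁ ∈ C) (hE₂ : E₂ ∈ C) (hA : A ∈ C)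
    (h12 : E₁ ≠ E₂) (h1 : A ≠ E₁) (h2 : A ≠ E₂) (hT : finrank F T = 3 * n)
    (hPS : E₁ ⊔ E₂ ≤ S) (hST : S ≤ T) (hAT : A ≤ T) :
    finrank F ↥((A ⊔ E₁) ⊓ S) + n = finrank F S := by
  have hsup : A ⊔ E₁ ⊔ S = T := by
    refine le_antisymm (sup_le (sup_le hAT (le_sup_left.trans (hPS.trans hST))) hST) ?_
    rw [← hC.sup_sup_eq_of_le hE₁ hE₂ hA h12 h1 h2 hT (hPS.trans hST) hAT]
    exact sup_le (sup_le (le_sup_right.trans le_sup_left) ((le_sup_right.trans hPS).trans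
      le_sup_right)) (le_sup_left.trans le_sup_left)
  have h := Submodule.finrank_sup_add_finrank_inf_eq (A ⊔ E₁) S
  rw [hsup, hT, hC.finrank_sup hA hE₁ hE₂ h1 h2 h12] at h
  omega

theorem two_mul_pow_sub_le_of_mem_pencil [Finite F] (hC : IsPseudoCap n C) (hE₁ : E₁ ∈ C)
    (hE₂ : E₂ ∈ C) (h12 : E₁ ≠ E₂)
    (hcount : ∀ T ∈ pencil C E₁ E₂, {E ∈ C | E ≤ T}.ncard = Nat.card F ^ n + 1)
    (hT₁ : T₁ ∈ pencil C E₁ E₂) (hT₂ : T₂ ∈ pencil C E₁ E₂) (hT : T₁ ≠ T₂) :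
    2 * (Nat.card F ^ n - 1) *
        (Nat.card F ^ (finrank F ↥(T₁ ⊓ T₂) - n) - Nat.card F ^ n) ≤
      Nat.card F ^ finrank F ↥(T₁ ⊓ T₂) - Nat.card F ^ (2 * n) := by
  have := Module.finite_of_finite F (M := V)
  set S := T₁ ⊓ T₂
  have hPS : E₁ ⊔ E₂ ≤ S := le_inf (sup_le_of_mem_pencil hT₁) (sup_le_of_mem_pencil hT₂)
  set 𝓜 := ⋃ T ∈ ({T₁, T₂} : Set (Submodule F V)), {E ∈ C | E ≤ T} \ {E₁, E₂}
  have h𝓜 : 𝓜.ncard = 2 * (Nat.card F ^ n - 1) := by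
    rw [Set.ncard_biUnion_of_ncard_eq (Set.toFinite _)
      ((hC.pairwiseDisjoint_pencil hE₁ hE₂ h12).subset (Set.pair_subset hT₁ hT₂))
      (fun T hT => ncard_sep_le_sdiff_pair hE₁ hE₂ h12 hcount (Set.pair_subset hT₁ hT₂ hT)),
      Set.ncard_pair hT]
  have hmem : ∀ A ∈ 𝓜, A ∈ C ∧ A ≠ E₁ ∧ A ≠ E₂ ∧
      finrank F ↥((A ⊔ E₁) ⊓ S) + n = finrank F S := by
    intro A hA
    simp only [𝓜, Set.mem_iUnion₂, Set.mem_insert_iff, Set.mem_singleton_iff, exists_prop,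
      exists_eq_or_imp, exists_eq_left, Set.mem_sdiff, Set.mem_sep_iff, not_or] at hA
    have hrank {T} := hC.finrank_of_mem_pencil (T := T) hE₁ hE₂ h12
    rcases hA with ⟨⟨hA, hAT⟩, h1, h2⟩ | ⟨⟨hA, hAT⟩, h1, h2⟩
    · exact ⟨hA, h1, h2, hC.finrank_sup_inf_add hE₁ hE₂ hA h12 h1 h2 (hrank hT₁) hPS
        inf_le_left hAT⟩
    · exact ⟨hA, h1, h2, hC.finrank_sup_inf_add hE₁ hE₂ hA h12 h1 h2 (hrank hT₂) hPS
        inf_le_right hAT⟩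
  have key := Submodule.ncard_mul_le_of_pairwise_inf_le (Set.toFinite 𝓜)
    (f := fun A => (A ⊔ E₁) ⊓ S) (k := finrank F S - n) hPS
    (fun A _ => le_inf le_sup_right (le_sup_left.trans hPS)) (fun A _ => inf_le_right)
    (fun A hA => by
      obtain ⟨hA, h1, h2, -⟩ := hmem A hA
      calc _ ≤ (A ⊔ E₁) ⊓ (E₂ ⊔ E₁) := inf_le_inf inf_le_left (sup_comm E₁ E₂).le
        _ = E₁ := hC.sup_inf_sup_eq hA hE₂ hE₁ h2 h1 h12.symm)
    (fun A hA B hB hAB => (inf_le_inf inf_le_left inf_le_left).trans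
      (hC.sup_inf_sup_eq (hmem A hA).1 (hmem B hB).1 hE₁ hAB (hmem A hA).2.1 (hmem B hB).2.1).le)
    (fun A hA => by have := (hmem A hA).2.2.2; omega)
  obtain ⟨E, hE, h1, h2, -⟩ := mem_pencil.1 hT₁
  rwa [h𝓜, hC.finrank_sup hE₁ hE₂ hE h12 h1.symm h2.symm, hC.1 E₁ hE₁] at key

theorem inf_eq_of_mem_pencil [Finite F] (hC : IsPseudoCap n C) (hE₁ : E₁ ∈ C) (hE₂ : E₂ ∈ C)
    (h12 : E₁ ≠ E₂)
    (hcount : ∀ T ∈ pencil C E₁ E₂, {E ∈ C | E ≤ T}.ncard = Nat.card F ^ n + 1)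
    (hT₁ : T₁ ∈ pencil C E₁ E₂) (hT₂ : T₂ ∈ pencil C E₁ E₂) (hT : T₁ ≠ T₂) :
    T₁ ⊓ T₂ = E₁ ⊔ E₂ := by
  have hrank₁ := hC.finrank_of_mem_pencil hE₁ hE₂ h12 hT₁
  have hPS : E₁ ⊔ E₂ ≤ T₁ ⊓ T₂ := le_inf (sup_le_of_mem_pencil hT₁) (sup_le_of_mem_pencil hT₂)
  refine le_antisymm ?_ hPS
  by_contra hSP
  obtain ⟨E, hE, h1, h2, -⟩ := mem_pencil.1 hT₁
  have hw₁ : 2 * n < finrank F ↥(T₁ ⊓ T₂) := hC.finrank_sup hE₁ hE₂ hE h12 h1.symm h2.symm ▸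
    Submodule.finrank_lt_finrank_of_lt (lt_of_le_not_ge hPS hSP)
  have hw₂ : finrank F ↥(T₁ ⊓ T₂) < 3 * n := by
    refine hrank₁ ▸ Submodule.finrank_lt_finrank_of_lt (inf_le_left.lt_of_ne fun h => hT ?_)
    refine Submodule.eq_of_le_of_finrank_le (inf_eq_left.1 h) ?_
    rw [hrank₁, hC.finrank_of_mem_pencil hE₁ hE₂ h12 hT₂]
  exact (pow_sub_pow_lt_two_mul Finite.one_lt_card hw₁ hw₂).not_ge
    (hC.two_mul_pow_sub_le_of_mem_pencil hE₁ hE₂ h12 hcount hT₁ hT₂ hT)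

theorem ncard_sdiff_pair_eq_ncard_pencil_mul [Finite F] (hC : IsPseudoCap n C) (hE₁ : E₁ ∈ C)
    (hE₂ : E₂ ∈ C) (h12 : E₁ ≠ E₂)
    (hcount : ∀ T ∈ pencil C E₁ E₂, {E ∈ C | E ≤ T}.ncard = Nat.card F ^ n + 1) :
    (C \ {E₁, E₂}).ncard = (pencil C E₁ E₂).ncard * (Nat.card F ^ n - 1) := by
  have := Module.finite_of_finite F (M := V)
  have hcover : C \ {E₁, E₂} = ⋃ T ∈ pencil C E₁ E₂, {E ∈ C | E ≤ T} \ {E₁, E₂} := by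
    ext A
    simp only [Set.mem_iUnion₂, Set.mem_sdiff, Set.mem_sep_iff, exists_prop]
    constructor
    · exact fun hA => ⟨_, Set.mem_image_of_mem _ hA, ⟨hA.1, le_sup_right⟩, hA.2⟩
    · exact fun ⟨_, _, ⟨hA, _⟩, hA'⟩ => ⟨hA, hA'⟩
  rw [hcover, Set.ncard_biUnion_of_ncard_eq (Set.toFinite _)
    (hC.pairwiseDisjoint_pencil hE₁ hE₂ h12)
    (fun T hT => ncard_sep_le_sdiff_pair hE₁ hE₂ h12 hcount hT)]

end IsPseudoCap

theorem IsGoodAt.ncard_sep_le_of_mem_pencil {q : ℕ} (hgood : IsGoodAt q n C E₁)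
    (hC : IsPseudoCap n C) (hE₁ : E₁ ∈ C) (hE₂ : E₂ ∈ C) (h12 : E₁ ≠ E₂)
    (hT : T ∈ pencil C E₁ E₂) : {E ∈ C | E ≤ T}.ncard = q ^ n + 1 := by
  obtain ⟨E, hE, h1, h2, rfl⟩ := mem_pencil.1 hT
  exact hgood _ (hC.finrank_of_mem_pencil hE₁ hE₂ h12 hT) (le_sup_left.trans le_sup_left)
    ⟨E₂, hE₂, E, hE, h12.symm, h1, h2.symm, le_sup_right.trans le_sup_left, le_sup_right⟩

end Pencil

theorem stmt_16_general (q n m : ℕ) (hn : 0 < n)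
    (F : Type*) [Field F] [Fintype F] (hF : Fintype.card F = q)
    (V : Type*) [AddCommGroup V] [Module F V] (hV : finrank F V = 2 * n + m)
    (𝓔 : Set (Submodule F V)) (h𝓔 : IsWeakEgg q n m 𝓔)
    (E₁ : Submodule F V) (hE₁ : E₁ ∈ 𝓔) (hgood : IsGoodAt q n 𝓔 E₁)
    (E₂ : Submodule F V) (hE₂ : E₂ ∈ 𝓔) (hne : E₂ ≠ E₁)
    (𝓣 : Set (Submodule F V))
    (h𝓣 : 𝓣 = (fun E : Submodule F V => E₁ ⊔ E₂ ⊔ E) '' (𝓔 \ {E₁, E₂})) :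
    (∀ T ∈ 𝓣, finrank F T = 3 * n ∧ {E' ∈ 𝓔 | E' ≤ T}.ncard = q ^ n + 1) ∧
    (∀ T₁ ∈ 𝓣, ∀ T₂ ∈ 𝓣, T₁ ≠ T₂ → T₁ ⊓ T₂ = E₁ ⊔ E₂) ∧
    𝓣.ncard = (q ^ m - 1) / (q ^ n - 1) := by
  obtain ⟨hC, h𝓔card⟩ := h𝓔
  have : FiniteDimensional F V := .of_finrank_pos (by omega)
  have hq : Nat.card F = q := Nat.card_eq_fintype_card.trans hF
  have hcount (T) (hT : T ∈ pencil 𝓔 E₁ E₂) : {E ∈ 𝓔 | E ≤ T}.ncard = Nat.card F ^ n + 1 :=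
    hq ▸ hgood.ncard_sep_le_of_mem_pencil hC hE₁ hE₂ hne.symm hT
  change 𝓣 = pencil 𝓔 E₁ E₂ at h𝓣
  subst h𝓣
  refine ⟨fun T hT => ⟨hC.finrank_of_mem_pencil hE₁ hE₂ hne.symm hT, hq ▸ hcount T hT⟩,
    fun T₁ hT₁ T₂ hT₂ => hC.inf_eq_of_mem_pencil hE₁ hE₂ hne.symm hcount hT₁ hT₂, ?_⟩
  have hqn : 1 < q ^ n := Nat.one_lt_pow hn.ne' (hF ▸ Fintype.one_lt_card)
  refine (Nat.div_eq_of_eq_mul_left (by omega) ?_).symm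
  rw [← hq, ← hC.ncard_sdiff_pair_eq_ncard_pencil_mul hE₁ hE₂ hne.symm hcount,
    Set.ncard_sdiff_pair hE₁ hE₂ hne.symm, h𝓔card, hq]
  omega

/-- If a weak egg `𝓔` is good at `E₁` and `E₂ ∈ 𝓔 \ {E₁}`, then each member of
`𝓣 = {E₁ ⊔ E₂ ⊔ E : E ∈ 𝓔 \ {E₁, E₂}}` is a `3n`-dimensional subspace containing
exactly `q^n + 1` elements of `𝓔`, any two distinct members of `𝓣` meet exactly in
`E₁ ⊔ E₂`, and `𝓣` has exactly `(q^m - 1)/(q^n - 1)` members. -/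
theorem stmt_16 (q n m : ℕ) (hq : IsPrimePow q) (hn : 0 < n) (hm : n < m)
    (F : Type*) [Field F] [Fintype F] (hF : Fintype.card F = q)
    (V : Type*) [AddCommGroup V] [Module F V] (hV : finrank F V = 2 * n + m)
    (𝓔 : Set (Submodule F V)) (h𝓔 : IsWeakEgg q n m 𝓔)
    (E₁ : Submodule F V) (hE₁ : E₁ ∈ 𝓔) (hgood : IsGoodAt q n 𝓔 E₁)
    (E₂ : Submodule F V) (hE₂ : E₂ ∈ 𝓔) (hne : E₂ ≠ E₁)
    (𝓣 : Set (Submodule F V))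
    (h𝓣 : 𝓣 = (fun E : Submodule F V => E₁ ⊔ E₂ ⊔ E) '' (𝓔 \ {E₁, E₂})) :
    (∀ T ∈ 𝓣, finrank F T = 3 * n ∧ {E' ∈ 𝓔 | E' ≤ T}.ncard = q ^ n + 1) ∧
    (∀ T₁ ∈ 𝓣, ∀ T₂ ∈ 𝓣, T₁ ≠ T₂ → T₁ ⊓ T₂ = E₁ ⊔ E₂) ∧
    𝓣.ncard = (q ^ m - 1) / (q ^ n - 1) :=
  stmt_16_general q n m hn F hF V hV 𝓔 h𝓔 E₁ hE₁ hgood E₂ hE₂ hne 𝓣 h𝓣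
end
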